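/- arXiv:math/0111214 — 3 statements merged into one kernel-verified Lean document; each statement's English description precedes it below -/
import Mathlib

section
/- Let x₁,…,xₙ be positive reals and Aᵢ = [[0,1],[-1,xᵢ]]. Suppose that for all 1 ≤ i ≤ k ≤ n, the product W = Aᵢ·Aᵢ₊₁···A_k = [[a,b],[c,d]] satisfies a ≤ 0 (with equality only when i = k), b > 0, c < 0 and d ≥ 0 (with d > 0 whenever (i,k) ≠ (1,n)). Then for the full product W = A₁···Aₙ = [[a,b],[c,d]], setting p_k = b_k/d_k for the partial products W_k = A₁···A_k = [[a_k,b_k],[c_k,d_k]] (1 ≤ k ≤ n-1), one has 0 < p₁ < p₂ < ⋯ < p_{n-1}. -/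
/-!
The admissibility hypothesis gives `b_k > 0` and `d_k > 0` for `k < n`, so each `p_k` is a
positive ratio. Since `W_{k+1} = W_k A_{k+1}`, the new right column is
`(b_{k+1}, d_{k+1}) = (a_k + x_{k+1} b_k, c_k + x_{k+1} d_k)`, whence
`b_{k+1} d_k - b_k d_{k+1} = a_k d_k - b_k c_k = det W_k = 1 > 0`, i.e. `p_k < p_{k+1}`.
-/

/-- The associated matrix of a cross ratio. -/
def assocMat (t : ℝ) : Matrix (Fin 2) (Fin 2) ℝ := !![0, 1; -1, t]

/-- The word `A_i · A_{i+1} ⋯ A_k` of associated matrices. -/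
def wordProd (x : ℕ → ℝ) (i k : ℕ) : Matrix (Fin 2) (Fin 2) ℝ :=
  ((List.range (k + 1 - i)).map (fun j => assocMat (x (i + j)))).prod

open Matrix

lemma det_assocMat (t : ℝ) : (assocMat t).det = 1 := by
  simp [assocMat]

lemma det_wordProd (x : ℕ → ℝ) (i k : ℕ) : (wordProd x i k).det = 1 := by
  rw [wordProd, ← coe_detMonoidHom, map_list_prod]
  exact List.prod_eq_one (by simp [det_assocMat])

lemma wordProd_succ_right (x : ℕ → ℝ) {i k : ℕ} (h : i ≤ k + 1) :
    wordProd x i (k + 1) = wordProd x i k * assocMat (x (k + 1)) := by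
  rw [wordProd, wordProd, show k + 1 + 1 - i = k + 1 - i + 1 by omega, List.range_succ,
    List.map_append, List.prod_append]
  simp [show i + (k + 1 - i) = k + 1 by omega]

lemma mul_assocMat_cross (W : Matrix (Fin 2) (Fin 2) ℝ) (t : ℝ) :
    (W * assocMat t) 0 1 * W 1 1 - W 0 1 * (W * assocMat t) 1 1 = W.det := by
  simp only [assocMat, mul_apply, of_apply, cons_val', cons_val_zero, cons_val_one,
    cons_val_fin_one, Fin.sum_univ_two, mul_one, det_fin_two]
  ring

lemma div_lt_div_mul_assocMat {W : Matrix (Fin 2) (Fin 2) ℝ} (hW : 0 < W.det) (t : ℝ)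
    (hd : 0 < W 1 1) (hd' : 0 < (W * assocMat t) 1 1) :
    W 0 1 / W 1 1 < (W * assocMat t) 0 1 / (W * assocMat t) 1 1 := by
  rw [div_lt_div_iff₀ hd hd']
  linarith [mul_assocMat_cross W t]

theorem stmt_2_general (n : ℕ) (x : ℕ → ℝ)
    (hadm : ∀ i k, 1 ≤ i → i ≤ k → k ≤ n →
      (wordProd x i k) 0 0 ≤ 0 ∧ ((wordProd x i k) 0 0 = 0 → i = k) ∧
      0 < (wordProd x i k) 0 1 ∧ (wordProd x i k) 1 0 < 0 ∧
      0 ≤ (wordProd x i k) 1 1 ∧ ((i, k) ≠ (1, n) → 0 < (wordProd x i k) 1 1)) :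
    (∀ k, 1 ≤ k → k ≤ n - 1 →
      0 < (wordProd x 1 k) 0 1 / (wordProd x 1 k) 1 1) ∧
    (∀ k, 1 ≤ k → k + 1 ≤ n - 1 →
      (wordProd x 1 k) 0 1 / (wordProd x 1 k) 1 1 <
        (wordProd x 1 (k + 1)) 0 1 / (wordProd x 1 (k + 1)) 1 1) := by
  have pos : ∀ k, 1 ≤ k → k ≤ n - 1 →
      0 < (wordProd x 1 k) 0 1 ∧ 0 < (wordProd x 1 k) 1 1 := by
    intro k hk1 hkn
    obtain ⟨-, -, hb, -, -, hd⟩ := hadm 1 k le_rfl hk1 (by omega)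
    exact ⟨hb, hd (by simp only [ne_eq, Prod.mk.injEq]; omega)⟩
  refine ⟨fun k hk1 hkn => div_pos (pos k hk1 hkn).1 (pos k hk1 hkn).2, ?_⟩
  intro k hk1 hkn
  have hd' := (pos (k + 1) (by omega) hkn).2
  rw [wordProd_succ_right x (by omega)] at hd' ⊢
  exact div_lt_div_mul_assocMat (by rw [det_wordProd]; exact one_pos) _
    (pos k hk1 (by omega)).2 hd'

theorem stmt_2 (n : ℕ) (x : ℕ → ℝ) (hn : 2 ≤ n)
    (hx : ∀ i, 1 ≤ i → i ≤ n → 0 < x i)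
    (hadm : ∀ i k, 1 ≤ i → i ≤ k → k ≤ n →
      (wordProd x i k) 0 0 ≤ 0 ∧ ((wordProd x i k) 0 0 = 0 → i = k) ∧
      0 < (wordProd x i k) 0 1 ∧ (wordProd x i k) 1 0 < 0 ∧
      0 ≤ (wordProd x i k) 1 1 ∧ ((i, k) ≠ (1, n) → 0 < (wordProd x i k) 1 1)) :
    (∀ k, 1 ≤ k → k ≤ n - 1 →
      0 < (wordProd x 1 k) 0 1 / (wordProd x 1 k) 1 1) ∧
    (∀ k, 1 ≤ k → k + 1 ≤ n - 1 →
      (wordProd x 1 k) 0 1 / (wordProd x 1 k) 1 1 <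
        (wordProd x 1 (k + 1)) 0 1 / (wordProd x 1 (k + 1)) 1 1) :=
  stmt_2_general n x hadm
end

section
/- Let A = [[a₁,a₂],[a₃,a₄]], B = [[b₁,b₂],[b₃,b₄]], C = [[c₁,c₂],[c₃,c₄]] be matrices in SL₂(ℝ) with aᵢ, bᵢ, cᵢ satisfying: first entries ≤ 0, second entries > 0, third entries < 0, fourth entries > 0 (for each matrix). If the (2,2) entry of AB equals the (2,2) entry of -C⁻¹, the (2,2) entry of BC equals the (2,2) entry of -A⁻¹, and the (2,2) entry of CA equals the (2,2) entry of -B⁻¹, then ABC = -I. -/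
/-!
Write `M = A * B`, with entries indexed from 1 here and from 0 in the code. Since `(C⁻¹)₂₂ = C₁₁`
for `C ∈ SL₂`, the claim `A * B * C = -1` says exactly that `C = -adjugate M`, i.e. `C₁₁ = -M₂₂`,
`C₁₂ = M₁₂`, `C₂₁ = M₂₁`, `C₂₂ = -M₁₁`; the first is the hypothesis on `A * B`. Multiplying
`det C = 1` by `A₁₂ B₂₁` and eliminating `B₂₁ C₁₂` and `A₁₂ C₂₁` with the other two hypotheses
leaves the quadratic `(C₂₂ + M₁₁) (A₂₂ B₂₂ C₂₂ + 1) = 0` in `C₂₂`. Positivity of the `(2,2)`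
entries kills the second factor, and then the hypotheses on `B * C` and `C * A` determine `C₁₂`
and `C₂₁`.
-/

namespace Matrix

variable {R : Type*} [CommRing R] {A B C : Matrix (Fin 2) (Fin 2) R}

theorem corner_quadratic_eq_zero (hA : A.det = 1) (hB : B.det = 1) (hC : C.det = 1)
    (hAB : (A * B) 1 1 = -C 0 0) (hBC : (B * C) 1 1 = -A 0 0) (hCA : (C * A) 1 1 = -B 0 0) :
    (C 1 1 + (A * B) 0 0) * (A 1 1 * B 1 1 * C 1 1 + 1) = 0 := by
  simp only [det_fin_two, mul_apply, Fin.sum_univ_two] at *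
  linear_combination -(A 0 1 * B 1 0) * hC + C 1 1 * A 0 1 * B 1 0 * hAB - A 0 1 * C 1 0 * hBC
    + (A 0 0 + B 1 1 * C 1 1) * hCA + C 1 1 * B 0 1 * B 1 0 * hA
    + C 1 1 * (A 0 0 * A 1 1 - 1) * hB

theorem entry_zero_one_eq_of_corner [IsDomain R] (hB : B.det = 1)
    (hBC : (B * C) 1 1 = -A 0 0) (hC₁₁ : C 1 1 = -(A * B) 0 0) (hB₁₀ : B 1 0 ≠ 0) :
    C 0 1 = (A * B) 0 1 := by
  simp only [det_fin_two, mul_apply, Fin.sum_univ_two] at *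
  exact mul_left_cancel₀ hB₁₀ (by linear_combination hBC - B 1 1 * hC₁₁ + A 0 0 * hB)

theorem entry_one_zero_eq_of_corner [IsDomain R] (hA : A.det = 1)
    (hCA : (C * A) 1 1 = -B 0 0) (hC₁₁ : C 1 1 = -(A * B) 0 0) (hA₀₁ : A 0 1 ≠ 0) :
    C 1 0 = (A * B) 1 0 := by
  simp only [det_fin_two, mul_apply, Fin.sum_univ_two] at *
  exact mul_left_cancel₀ hA₀₁ (by linear_combination hCA - A 1 1 * hC₁₁ + B 0 0 * hA)

theorem mul_mul_eq_neg_one_of_corners [LinearOrder R] [IsStrictOrderedRing R]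
    (hA : A.det = 1) (hB : B.det = 1) (hC : C.det = 1)
    (hA₁₁ : 0 < A 1 1) (hB₁₁ : 0 < B 1 1) (hC₁₁ : 0 < C 1 1) (hA₀₁ : A 0 1 ≠ 0) (hB₁₀ : B 1 0 ≠ 0)
    (hAB : (A * B) 1 1 = -C 0 0) (hBC : (B * C) 1 1 = -A 0 0) (hCA : (C * A) 1 1 = -B 0 0) :
    A * B * C = -1 := by
  have hC₁₁_eq : C 1 1 = -(A * B) 0 0 := by
    have hfactor : A 1 1 * B 1 1 * C 1 1 + 1 ≠ 0 := by positivity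
    have hroot := (mul_eq_zero.mp (corner_quadratic_eq_zero hA hB hC hAB hBC hCA)).resolve_right hfactor
    linear_combination hroot
  have hC_eq : C = -adjugate (A * B) := by
    ext i j
    fin_cases i <;> fin_cases j <;> simp only [Fin.zero_eta, Fin.mk_one, Fin.isValue,
      adjugate_fin_two, neg_apply, of_apply, cons_val', cons_val_zero, cons_val_one, cons_val_fin_one,
      neg_neg]
    · linear_combination hAB
    · exact entry_zero_one_eq_of_corner hB hBC hC₁₁_eq hB₁₀
    · exact entry_one_zero_eq_of_corner hA hCA hC₁₁_eq hA₀₁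
    · exact hC₁₁_eq
  rw [hC_eq, mul_neg, mul_adjugate, det_mul, hA, hB, one_mul, one_smul]

end Matrix

theorem stmt_8_general (a₁ a₂ a₃ a₄ b₁ b₂ b₃ b₄ c₁ c₂ c₃ c₄ : ℝ)
    (hdetA : a₁ * a₄ - a₂ * a₃ = 1) (hdetB : b₁ * b₄ - b₂ * b₃ = 1)
    (hdetC : c₁ * c₄ - c₂ * c₃ = 1)
    (ha₂ : 0 < a₂) (ha₄ : 0 < a₄)
    (hb₃ : b₃ < 0) (hb₄ : 0 < b₄)
    (hc₄ : 0 < c₄)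
    (A : Matrix (Fin 2) (Fin 2) ℝ) (B : Matrix (Fin 2) (Fin 2) ℝ)
    (C : Matrix (Fin 2) (Fin 2) ℝ)
    (hA : A = !![a₁, a₂; a₃, a₄]) (hB : B = !![b₁, b₂; b₃, b₄])
    (hC : C = !![c₁, c₂; c₃, c₄])
    -- the (2,2) entry of -C⁻¹ is -c₁, and similarly for A and B
    (hAB : (A * B) 1 1 = -c₁) (hBC : (B * C) 1 1 = -a₁) (hCA : (C * A) 1 1 = -b₁) :
    A * B * C = -1 := by
  subst hA hB hC
  exact Matrix.mul_mul_eq_neg_one_of_corners (by rwa [Matrix.det_fin_two_of])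
    (by rwa [Matrix.det_fin_two_of]) (by rwa [Matrix.det_fin_two_of]) ha₄ hb₄ hc₄ ha₂.ne' hb₃.ne
    hAB hBC hCA

theorem stmt_8 (a₁ a₂ a₃ a₄ b₁ b₂ b₃ b₄ c₁ c₂ c₃ c₄ : ℝ)
    (hdetA : a₁ * a₄ - a₂ * a₃ = 1) (hdetB : b₁ * b₄ - b₂ * b₃ = 1)
    (hdetC : c₁ * c₄ - c₂ * c₃ = 1)
    (ha₁ : a₁ ≤ 0) (ha₂ : 0 < a₂) (ha₃ : a₃ < 0) (ha₄ : 0 < a₄)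
    (hb₁ : b₁ ≤ 0) (hb₂ : 0 < b₂) (hb₃ : b₃ < 0) (hb₄ : 0 < b₄)
    (hc₁ : c₁ ≤ 0) (hc₂ : 0 < c₂) (hc₃ : c₃ < 0) (hc₄ : 0 < c₄)
    (A : Matrix (Fin 2) (Fin 2) ℝ) (B : Matrix (Fin 2) (Fin 2) ℝ)
    (C : Matrix (Fin 2) (Fin 2) ℝ)
    (hA : A = !![a₁, a₂; a₃, a₄]) (hB : B = !![b₁, b₂; b₃, b₄])
    (hC : C = !![c₁, c₂; c₃, c₄])
    -- the (2,2) entry of -C⁻¹ is -c₁, and similarly for A and B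
    (hAB : (A * B) 1 1 = -c₁) (hBC : (B * C) 1 1 = -a₁) (hCA : (C * A) 1 1 = -b₁) :
    A * B * C = -1 :=
  stmt_8_general a₁ a₂ a₃ a₄ b₁ b₂ b₃ b₄ c₁ c₂ c₃ c₄ hdetA hdetB hdetC ha₂ ha₄ hb₃ hb₄ hc₄ A B C hA
    hB hC hAB hBC hCA
end

section
/- Let x, y, z > 0 and X = [[0,1],[-1,x]], Y = [[0,1],[-1,y]], Z = [[0,1],[-1,z]]. Then (XYZ)² = -I if and only if xyz = x + y + z. -/
/-!
Each factor lies in `SL₂`, hence so does `M = XYZ`. By Cayley–Hamilton `M² = (tr M) M - 1`, so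
`M² = -1` exactly when `(tr M) M = 0`, i.e. when `tr M = 0` since `M ≠ 0`. Multiplying out,
`tr (XYZ) = xyz - (x + y + z)`.
-/

namespace Matrix

variable {R : Type*}

theorem sq_eq_trace_smul_sub_det_smul_one_fin_two [CommRing R] [Nontrivial R]
    (M : Matrix (Fin 2) (Fin 2) R) : M ^ 2 = M.trace • M - M.det • 1 := by
  have h := M.aeval_self_charpoly
  rw [M.charpoly_fin_two] at h
  rw [← sub_eq_zero, ← sub_add]
  simpa [Algebra.smul_def] using h

theorem sq_eq_neg_one_iff_trace_eq_zero_of_det_eq_one [CommRing R] [IsDomain R]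
    {M : Matrix (Fin 2) (Fin 2) R} (hM : M.det = 1) : M ^ 2 = -1 ↔ M.trace = 0 := by
  have hM0 : M ≠ 0 := by
    rintro rfl
    simp at hM
  rw [M.sq_eq_trace_smul_sub_det_smul_one_fin_two, hM, one_smul, sub_eq_neg_self, smul_eq_zero,
    or_iff_left hM0]

theorem det_fin_two_of_zero_one_neg_one [CommRing R] (x : R) : det !![0, 1; -1, x] = 1 := by
  simp [det_fin_two_of]

theorem trace_mul_mul_fin_two_of_zero_one_neg_one [CommRing R] (x y z : R) :
    trace (!![0, 1; -1, x] * !![0, 1; -1, y] * !![0, 1; -1, z]) = x * y * z - (x + y + z) := by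
  rw [mul_fin_two, mul_fin_two, trace_fin_two_of]
  ring

end Matrix

theorem stmt_11_general (x y z : ℝ) :
    ((!![0, 1; -1, x] : Matrix (Fin 2) (Fin 2) ℝ) * !![0, 1; -1, y] *
        !![0, 1; -1, z]) ^ 2 = -1 ↔ x * y * z = x + y + z := by
  have hdet : (!![0, 1; -1, x] * !![0, 1; -1, y] * !![0, 1; -1, z] :
      Matrix (Fin 2) (Fin 2) ℝ).det = 1 := by
    simp only [Matrix.det_mul, Matrix.det_fin_two_of_zero_one_neg_one, one_mul]
  rw [Matrix.sq_eq_neg_one_iff_trace_eq_zero_of_det_eq_one hdet,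
    Matrix.trace_mul_mul_fin_two_of_zero_one_neg_one, sub_eq_zero]

theorem stmt_11 (x y z : ℝ) (hx : 0 < x) (hy : 0 < y) (hz : 0 < z) :
    ((!![0, 1; -1, x] : Matrix (Fin 2) (Fin 2) ℝ) * !![0, 1; -1, y] *
        !![0, 1; -1, z]) ^ 2 = -1 ↔ x * y * z = x + y + z :=
  stmt_11_general x y z
end
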